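/- arXiv:1812.11832 — 5 statements merged into one kernel-verified Lean document; each statement's English description precedes it below -/
import Mathlib

section
/- If Φ is totally bounded with respect to the sup-norm distance, then the topology induced by the pseudo-metric D_X coincides with the initial topology on X with respect to Φ. -/
/-!
Every `φ ∈ Φ` is `1`-Lipschitz for `D_X`, so the topology of the `D_X`-balls is finer than the
initial one. Conversely, total boundedness replaces the supremum over `Φ` by a finite `r/3`-net
`S ⊆ Φ`: on an initial-topology neighbourhood of `x` every `ψ ∈ S` moves by less than `r/3`,
hence every `φ ∈ Φ` moves by at most `r`. By the triangle inequality for `D_X`, its balls are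
then open in the initial topology.
-/

open scoped ENNReal NNReal Topology
open Filter TopologicalSpace

section BallTopology

variable {X : Type*}

abbrev ballTopology (D : X → X → ℝ≥0∞) : TopologicalSpace X :=
  generateFrom {U | ∃ x : X, ∃ ε : ℝ≥0∞, 0 < ε ∧ U = {y | D x y < ε}}

lemma ballTopology_isOpen_ball (D : X → X → ℝ≥0∞) (x : X) {ε : ℝ≥0∞} (hε : 0 < ε) :
    IsOpen[ballTopology D] {y | D x y < ε} :=
  isOpen_generateFrom_of_mem ⟨x, ε, hε, rfl⟩

lemma continuous_ballTopology {D : X → X → ℝ≥0∞} (hD : ∀ x, D x x = 0) {f : X → ℝ}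
    (hf : ∀ x y, ENNReal.ofReal |f x - f y| ≤ D x y) : Continuous[ballTopology D, _] f := by
  let _ := ballTopology D
  refine continuous_iff_continuousAt.mpr fun x => Metric.tendsto_nhds.mpr fun δ hδ => ?_
  have hδ' : 0 < ENNReal.ofReal δ := ENNReal.ofReal_pos.mpr hδ
  filter_upwards [(ballTopology_isOpen_ball D x hδ').mem_nhds (by simpa [hD x] using hδ')]
    with y hy
  rw [Real.dist_eq, abs_sub_comm]
  exact (ENNReal.ofReal_lt_ofReal_iff hδ).mp ((hf x y).trans_lt hy)

lemma le_ballTopology {t : TopologicalSpace X} {D : X → X → ℝ≥0∞}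
    (htri : ∀ x y z, D x z ≤ D x y + D y z)
    (hnhds : ∀ x (r : ℝ≥0), 0 < r → ∀ᶠ y in 𝓝 x, D x y ≤ r) : t ≤ ballTopology D := by
  refine le_generateFrom ?_
  rintro _ ⟨x, ε, -, rfl⟩
  refine isOpen_iff_mem_nhds.mpr fun y (hy : D x y < ε) => ?_
  obtain ⟨r, hr, hlt⟩ := ENNReal.lt_iff_exists_add_pos_lt.mp hy
  filter_upwards [hnhds y r hr] with z hz
  exact (htri x y z).trans_lt ((add_le_add le_rfl hz).trans_lt hlt)

end BallTopology

section SupEDist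

variable {X : Type*} {Φ : Set (X → ℝ)}

noncomputable def supEDist (Φ : Set (X → ℝ)) (x y : X) : ℝ≥0∞ :=
  ⨆ φ ∈ Φ, ENNReal.ofReal |φ x - φ y|

lemma ofReal_abs_sub_le_supEDist {φ : X → ℝ} (hφ : φ ∈ Φ) (x y : X) :
    ENNReal.ofReal |φ x - φ y| ≤ supEDist Φ x y := by
  unfold supEDist
  exact le_iSup₂ (f := fun φ _ => ENNReal.ofReal |φ x - φ y|) φ hφ

lemma supEDist_self (Φ : Set (X → ℝ)) (x : X) : supEDist Φ x x = 0 := by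
  simp [supEDist]

lemma supEDist_triangle (Φ : Set (X → ℝ)) (x y z : X) :
    supEDist Φ x z ≤ supEDist Φ x y + supEDist Φ y z :=
  iSup₂_le fun φ hφ => calc
    ENNReal.ofReal |φ x - φ z| ≤ ENNReal.ofReal (|φ x - φ y| + |φ y - φ z|) :=
      ENNReal.ofReal_le_ofReal (abs_sub_le _ _ _)
    _ = ENNReal.ofReal |φ x - φ y| + ENNReal.ofReal |φ y - φ z| :=
      ENNReal.ofReal_add (abs_nonneg _) (abs_nonneg _)
    _ ≤ supEDist Φ x y + supEDist Φ y z :=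
      add_le_add (ofReal_abs_sub_le_supEDist hφ x y) (ofReal_abs_sub_le_supEDist hφ y z)

abbrev initialTopology (Φ : Set (X → ℝ)) : TopologicalSpace X :=
  ⨅ φ ∈ Φ, induced φ inferInstance

lemma continuous_initialTopology {φ : X → ℝ} (hφ : φ ∈ Φ) : Continuous[initialTopology Φ, _] φ :=
  continuous_iff_le_induced.mpr (iInf₂_le φ hφ)

lemma eventually_supEDist_le
    (htb : ∀ ε : ℝ, 0 < ε → ∃ S : Finset (X → ℝ), ↑S ⊆ Φ ∧
      ∀ φ ∈ Φ, ∃ ψ ∈ S, (⨆ x, ENNReal.ofReal |φ x - ψ x|) < ENNReal.ofReal ε)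
    (x : X) (r : ℝ≥0) (hr : 0 < r) :
    ∀ᶠ y in @nhds X (initialTopology Φ) x, supEDist Φ x y ≤ r := by
  let _ := initialTopology Φ
  set δ : ℝ := r / 3
  have hδ : 0 < δ := by positivity
  obtain ⟨S, hSΦ, hS⟩ := htb δ hδ
  have hnear : ∀ᶠ y in 𝓝 x, ∀ ψ ∈ S, |ψ y - ψ x| < δ :=
    (eventually_all_finset S).mpr fun ψ hψ =>
      (continuous_initialTopology (hSΦ hψ)).continuousAt.eventually (Metric.ball_mem_nhds _ hδ)
  filter_upwards [hnear] with y hy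
  refine iSup₂_le fun φ hφ => ?_
  obtain ⟨ψ, hψS, hψ⟩ := hS φ hφ
  have hunif (z : X) : |φ z - ψ z| < δ :=
    (ENNReal.ofReal_lt_ofReal_iff hδ).mp
      ((le_iSup (fun z => ENNReal.ofReal |φ z - ψ z|) z).trans_lt hψ)
  have hφxy : |φ x - φ y| ≤ r := by
    have hx := hunif x
    have hy' := hunif y
    have hxy := hy ψ hψS
    rw [abs_lt] at hx hy' hxy
    have hδr : 3 * δ = r := by ring
    rw [abs_le]
    constructor <;> linarith
  exact (ENNReal.ofReal_le_ofReal hφxy).trans_eq ENNReal.ofReal_coe_nnreal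

end SupEDist

theorem stmt3_general {X : Type*} (Φ : Set (X → ℝ))
    (htb : ∀ ε : ℝ, 0 < ε → ∃ S : Finset (X → ℝ), ↑S ⊆ Φ ∧
      ∀ φ ∈ Φ, ∃ ψ ∈ S, (⨆ x, ENNReal.ofReal |φ x - ψ x|) < ENNReal.ofReal ε)
    (DX : X → X → ℝ≥0∞)
    (hDX : ∀ x1 x2, DX x1 x2 = ⨆ φ ∈ Φ, ENNReal.ofReal |φ x1 - φ x2|) :
    TopologicalSpace.generateFrom
        { U : Set X | ∃ x : X, ∃ ε : ℝ≥0∞, 0 < ε ∧ U = { x' : X | DX x x' < ε } }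
      = ⨅ φ ∈ Φ, TopologicalSpace.induced φ inferInstance := by
  obtain rfl : DX = supEDist Φ := funext₂ hDX
  refine le_antisymm (le_iInf₂ fun φ hφ => continuous_iff_le_induced.mp ?_) ?_
  · exact continuous_ballTopology (supEDist_self Φ) (ofReal_abs_sub_le_supEDist hφ)
  · exact le_ballTopology (supEDist_triangle Φ) (eventually_supEDist_le htb)

/-- if `Φ` is totally bounded for the sup-norm distance, then the topology
induced by the pseudo-metric `D_X` coincides with the initial topology on `X` w.r.t. `Φ`. -/
theorem stmt3 {X : Type*} [Nonempty X] (Φ : Set (X → ℝ))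
    (hb : ∀ φ ∈ Φ, ∃ C : ℝ, ∀ x, |φ x| ≤ C)
    (htb : ∀ ε : ℝ, 0 < ε → ∃ S : Finset (X → ℝ), ↑S ⊆ Φ ∧
      ∀ φ ∈ Φ, ∃ ψ ∈ S, (⨆ x, ENNReal.ofReal |φ x - ψ x|) < ENNReal.ofReal ε)
    (DX : X → X → ℝ≥0∞)
    (hDX : ∀ x1 x2, DX x1 x2 = ⨆ φ ∈ Φ, ENNReal.ofReal |φ x1 - φ x2|) :
    TopologicalSpace.generateFrom
        { U : Set X | ∃ x : X, ∃ ε : ℝ≥0∞, 0 < ε ∧ U = { x' : X | DX x x' < ε } }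
      = ⨅ φ ∈ Φ, TopologicalSpace.induced φ inferInstance :=
  stmt3_general Φ htb DX hDX
end

section
/- If Φ is compact with respect to the sup-norm distance, then every sequence in X admits a Cauchy subsequence with respect to D_X; consequently, if in addition (X, D_X) is complete, then (X, D_X) is compact. -/
open scoped ENNReal

/-!
Give `X` the discrete topology, so that `Φ` becomes a compact set `K` of bounded continuous
functions. The evaluation map `x ↦ (f ↦ f x)` sends `X` into the bounded continuous functions on
`K`, and `D_X` is exactly the sup-distance between images. Each evaluation is `1`-Lipschitz on `K`
and bounded by the radius of `K`, so by Arzelà–Ascoli the image of `X` has compact closure; hence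
every sequence in `X` has a subsequence whose image converges, and is therefore `D_X`-Cauchy.
-/

open Filter Set

namespace BoundedContinuousFunction

variable {α : Type*} [TopologicalSpace α]

lemma edist_eq_iSup_ofReal_abs_sub (f g : α →ᵇ ℝ) :
    edist f g = ⨆ x, ENNReal.ofReal |f x - g x| := by
  rw [edist_eq_iSup]
  simp only [edist_dist, Real.dist_eq]

lemma mem_range_coe_of_bounded [DiscreteTopology α] {φ : α → ℝ} (hφ : ∃ C, ∀ x, |φ x| ≤ C) :
    φ ∈ range ((⇑) : (α →ᵇ ℝ) → α → ℝ) :=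
  let ⟨C, hC⟩ := hφ
  ⟨ofNormedAddCommGroupDiscrete φ C hC, rfl⟩

noncomputable def evalOn (K : Set (α →ᵇ ℝ)) [CompactSpace K] (x : α) : K →ᵇ ℝ :=
  mkOfCompact ⟨fun f => (f : α →ᵇ ℝ) x,
    (lipschitz_eval_const x).continuous.comp continuous_subtype_val⟩

variable (K : Set (α →ᵇ ℝ)) [CompactSpace K]

@[simp]
lemma evalOn_apply (x : α) (f : K) : evalOn K x f = (f : α →ᵇ ℝ) x := rfl

lemma edist_evalOn (x y : α) :
    edist (evalOn K x) (evalOn K y) = ⨆ f ∈ K, ENNReal.ofReal |f x - f y| := by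
  rw [edist_eq_iSup_ofReal_abs_sub, iSup_subtype']
  rfl

lemma isCompact_closure_range_evalOn : IsCompact (closure (range (evalOn K))) := by
  obtain ⟨R, hR⟩ := (isCompact_iff_compactSpace.2 ‹CompactSpace K›).isBounded.subset_closedBall 0
  refine arzela_ascoli (Metric.closedBall 0 R) (isCompact_closedBall 0 R) _ ?_ ?_
  · rintro _ f ⟨x, rfl⟩
    rw [evalOn_apply, mem_closedBall_zero_iff]
    exact (norm_coe_le_norm _ x).trans (mem_closedBall_zero_iff.1 (hR f.2))
  · refine Metric.equicontinuous_of_continuity_modulus id tendsto_id _ ?_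
    rintro f g ⟨_, x, rfl⟩
    exact dist_coe_le_dist x

end BoundedContinuousFunction

open BoundedContinuousFunction

theorem stmt4_general {X : Type*} (Φ : Set (X → ℝ))
    (hb : ∀ φ ∈ Φ, ∃ C : ℝ, ∀ x, |φ x| ≤ C)
    (eD : (X → ℝ) → (X → ℝ) → ℝ≥0∞)
    (heD : ∀ φ ψ, eD φ ψ = ⨆ x, ENNReal.ofReal |φ x - ψ x|)
    (DX : X → X → ℝ≥0∞)
    (hDX : ∀ x1 x2, DX x1 x2 = ⨆ φ ∈ Φ, ENNReal.ofReal |φ x1 - φ x2|)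
    (hΦcomp : ∀ u : ℕ → X → ℝ, (∀ n, u n ∈ Φ) →
      ∃ ψ ∈ Φ, ∃ k : ℕ → ℕ, StrictMono k ∧
        ∀ ε : ℝ≥0∞, 0 < ε → ∃ N, ∀ n ≥ N, eD (u (k n)) ψ < ε) :
    (∀ x : ℕ → X, ∃ k : ℕ → ℕ, StrictMono k ∧
      ∀ ε : ℝ≥0∞, 0 < ε → ∃ N, ∀ m ≥ N, ∀ n ≥ N, DX (x (k m)) (x (k n)) < ε) ∧
    ((∀ x : ℕ → X,
        (∀ ε : ℝ≥0∞, 0 < ε → ∃ N, ∀ m ≥ N, ∀ n ≥ N, DX (x m) (x n) < ε) →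
        ∃ y : X, ∀ ε : ℝ≥0∞, 0 < ε → ∃ N, ∀ n ≥ N, DX (x n) y < ε) →
      ∀ x : ℕ → X, ∃ y : X, ∃ k : ℕ → ℕ, StrictMono k ∧
        ∀ ε : ℝ≥0∞, 0 < ε → ∃ N, ∀ n ≥ N, DX (x (k n)) y < ε) := by
  let : TopologicalSpace X := ⊥
  have : DiscreteTopology X := ⟨rfl⟩
  set K : Set (X →ᵇ ℝ) := (⇑) ⁻¹' Φ
  have hΦK : (⇑) '' K = Φ :=
    image_preimage_eq_of_subset fun φ hφ => mem_range_coe_of_bounded (hb φ hφ)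
  have hK : IsSeqCompact K := by
    intro u hu
    obtain ⟨ψ, hψ, k, hk, hconv⟩ := hΦcomp (fun n => u n) hu
    obtain ⟨g, hgK, rfl⟩ := hΦK ▸ hψ
    refine ⟨g, hgK, k, hk, EMetric.tendsto_atTop.2 ?_⟩
    simpa only [heD, edist_eq_iSup_ofReal_abs_sub, Function.comp_apply] using hconv
  have : CompactSpace K := isCompact_iff_compactSpace.1 hK.isCompact
  have hDX_edist : ∀ x y, DX x y = edist (evalOn K x) (evalOn K y) := by
    intro x y
    rw [hDX, edist_evalOn, ← hΦK, iSup_image]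
  have cauchy : ∀ x : ℕ → X, ∃ k : ℕ → ℕ, StrictMono k ∧
      ∀ ε : ℝ≥0∞, 0 < ε → ∃ N, ∀ m ≥ N, ∀ n ≥ N, DX (x (k m)) (x (k n)) < ε := by
    intro x
    obtain ⟨L, -, k, hk, hL⟩ := (isCompact_closure_range_evalOn K).tendsto_subseq
      fun n => subset_closure (mem_range_self (x n))
    refine ⟨k, hk, ?_⟩
    simpa only [hDX_edist, Function.comp_apply] using EMetric.cauchySeq_iff.1 hL.cauchySeq
  refine ⟨cauchy, fun hcomplete x => ?_⟩
  obtain ⟨k, hk, hxk⟩ := cauchy x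
  obtain ⟨y, hy⟩ := hcomplete (x ∘ k) hxk
  exact ⟨y, k, hk, hy⟩

/-- if `Φ` is (sequentially) compact for the sup-norm distance, then every
sequence in `X` has a `D_X`-Cauchy subsequence; consequently, if `(X, D_X)` is complete
then it is (sequentially) compact. -/
theorem stmt4 {X : Type*} [Nonempty X] (Φ : Set (X → ℝ))
    (hb : ∀ φ ∈ Φ, ∃ C : ℝ, ∀ x, |φ x| ≤ C)
    (eD : (X → ℝ) → (X → ℝ) → ℝ≥0∞)
    (heD : ∀ φ ψ, eD φ ψ = ⨆ x, ENNReal.ofReal |φ x - ψ x|)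
    (DX : X → X → ℝ≥0∞)
    (hDX : ∀ x1 x2, DX x1 x2 = ⨆ φ ∈ Φ, ENNReal.ofReal |φ x1 - φ x2|)
    (hΦcomp : ∀ u : ℕ → X → ℝ, (∀ n, u n ∈ Φ) →
      ∃ ψ ∈ Φ, ∃ k : ℕ → ℕ, StrictMono k ∧
        ∀ ε : ℝ≥0∞, 0 < ε → ∃ N, ∀ n ≥ N, eD (u (k n)) ψ < ε) :
    (∀ x : ℕ → X, ∃ k : ℕ → ℕ, StrictMono k ∧
      ∀ ε : ℝ≥0∞, 0 < ε → ∃ N, ∀ m ≥ N, ∀ n ≥ N, DX (x (k m)) (x (k n)) < ε) ∧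
    ((∀ x : ℕ → X,
        (∀ ε : ℝ≥0∞, 0 < ε → ∃ N, ∀ m ≥ N, ∀ n ≥ N, DX (x m) (x n) < ε) →
        ∃ y : X, ∀ ε : ℝ≥0∞, 0 < ε → ∃ N, ∀ n ≥ N, DX (x n) y < ε) →
      ∀ x : ℕ → X, ∃ y : X, ∃ k : ℕ → ℕ, StrictMono k ∧
        ∀ ε : ℝ≥0∞, 0 < ε → ∃ N, ∀ n ≥ N, DX (x (k n)) y < ε) :=
  stmt4_general Φ hb eD heD DX hDX hΦcomp
end

section
/- If Φ is compact with respect to the sup-norm distance, then every sequence in G admits a Cauchy subsequence with respect to D_G; hence if G is complete with respect to D_G it is compact. -/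
/-!
Precomposition with `g ∈ G` maps the compact set `Φ ⊆ X →ᵤ ℝ` into itself and is 1-Lipschitz, and
`D_G(g₁, g₂)` is the uniform distance on `Φ` between the precomposition maps of `g₁` and `g₂`. By
Arzelà–Ascoli these maps form a relatively compact family for uniform convergence on `Φ`, so every
sequence in `G` has a subsequence along which they converge, hence are `D_G`-Cauchy.
-/

open Filter Set Topology
open scoped UniformConvergence NNReal ENNReal

theorem ArzelaAscoli.exists_cauchySeq_subseq_of_lipschitzOnWith {α β : Type*}
    [PseudoEMetricSpace α] [EMetricSpace β] {K : Set α} {L : Set β} (hK : IsCompact K)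
    (hL : IsCompact L) {C : ℝ≥0} {f : ℕ → α → β} (hf : ∀ n, LipschitzOnWith C (f n) K)
    (hfL : ∀ n, MapsTo (f n) K L) :
    ∃ φ : ℕ → ℕ, StrictMono φ ∧ CauchySeq fun n ↦ UniformOnFun.ofFun {K} (f (φ n)) := by
  set F : ℕ → α →ᵤ[{K}] β := fun n ↦ UniformOnFun.ofFun {K} (f n)
  have hcomp : IsCompact (closure (range F)) := by
    refine ArzelaAscoli.isCompact_closure_of_isClosedEmbedding (F := UniformOnFun.toFun {K})
      (by simpa using hK) IsClosedEmbedding.id ?_ ?_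
    · rintro _ rfl
      refine (LipschitzOnWith.uniformEquicontinuousOn _ C ?_).equicontinuousOn
      rintro ⟨_, n, rfl⟩
      exact hf n
    · rintro _ rfl x hx
      exact ⟨L, hL, by rintro _ ⟨n, rfl⟩; exact hfL n hx⟩
  obtain ⟨_, -, φ, hφ, hlim⟩ := hcomp.tendsto_subseq fun n ↦ subset_closure (mem_range_self n)
  exact ⟨φ, hφ, hlim.cauchySeq⟩

theorem UniformFun.lipschitzWith_one_precomp {α β γ : Type*} [PseudoEMetricSpace β]
    (g : γ → α) : LipschitzWith 1 fun f : α →ᵤ β ↦ ofFun (toFun f ∘ g) :=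
  lipschitzWith_iff.mpr fun y ↦ lipschitzWith_eval (g y)

theorem stmt9_general {X : Type*} (Φ : Set (X → ℝ))
    (G : Subgroup (Equiv.Perm X))
    (hG : ∀ g ∈ G, ∀ φ ∈ Φ, (fun x => φ (g x)) ∈ Φ)
    (eD : (X → ℝ) → (X → ℝ) → ℝ≥0∞)
    (heD : ∀ φ ψ, eD φ ψ = ⨆ x, ENNReal.ofReal |φ x - ψ x|)
    (DG : Equiv.Perm X → Equiv.Perm X → ℝ≥0∞)
    (hDG : ∀ g1 g2, DG g1 g2 = ⨆ φ ∈ Φ, eD (fun x => φ (g1 x)) (fun x => φ (g2 x)))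
    (hΦcomp : ∀ u : ℕ → X → ℝ, (∀ n, u n ∈ Φ) →
      ∃ ψ ∈ Φ, ∃ k : ℕ → ℕ, StrictMono k ∧
        ∀ ε : ℝ≥0∞, 0 < ε → ∃ N, ∀ n ≥ N, eD (u (k n)) ψ < ε) :
    (∀ u : ℕ → Equiv.Perm X, (∀ n, u n ∈ G) →
      ∃ k : ℕ → ℕ, StrictMono k ∧
        ∀ ε : ℝ≥0∞, 0 < ε → ∃ N, ∀ m ≥ N, ∀ n ≥ N, DG (u (k m)) (u (k n)) < ε) ∧
    ((∀ u : ℕ → Equiv.Perm X, (∀ n, u n ∈ G) →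
        (∀ ε : ℝ≥0∞, 0 < ε → ∃ N, ∀ m ≥ N, ∀ n ≥ N, DG (u m) (u n) < ε) →
        ∃ g ∈ G, ∀ ε : ℝ≥0∞, 0 < ε → ∃ N, ∀ n ≥ N, DG (u n) g < ε) →
      ∀ u : ℕ → Equiv.Perm X, (∀ n, u n ∈ G) →
        ∃ g ∈ G, ∃ k : ℕ → ℕ, StrictMono k ∧
          ∀ ε : ℝ≥0∞, 0 < ε → ∃ N, ∀ n ≥ N, DG (u (k n)) g < ε) := by
  have heD' : ∀ φ ψ, eD φ ψ = edist (UniformFun.ofFun φ) (UniformFun.ofFun ψ) := by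
    simp [heD, UniformFun.edist_def, edist_dist, Real.dist_eq]
  set K : Set (X →ᵤ ℝ) := UniformFun.toFun ⁻¹' Φ
  have hK : IsCompact K := by
    refine IsSeqCompact.isCompact fun u hu ↦ ?_
    obtain ⟨ψ, hψ, k, hk, hlim⟩ := hΦcomp (fun n ↦ UniformFun.toFun (u n)) hu
    simp only [heD'] at hlim
    exact ⟨UniformFun.ofFun ψ, hψ, k, hk, EMetric.tendsto_atTop.mpr hlim⟩
  let T (g : Equiv.Perm X) : (X →ᵤ ℝ) →ᵤ[{K}] (X →ᵤ ℝ) :=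
    UniformOnFun.ofFun {K} fun f ↦ UniformFun.ofFun (UniformFun.toFun f ∘ g)
  have hDG' : ∀ g₁ g₂, DG g₁ g₂ = edist (T g₁) (T g₂) := by
    intro g₁ g₂
    rw [hDG, UniformOnFun.edist_def, sUnion_singleton, ← UniformFun.toFun.symm.iSup_comp]
    simp only [heD']
    rfl
  have hcauchy : ∀ u : ℕ → Equiv.Perm X, (∀ n, u n ∈ G) → ∃ k : ℕ → ℕ, StrictMono k ∧
      ∀ ε : ℝ≥0∞, 0 < ε → ∃ N, ∀ m ≥ N, ∀ n ≥ N, DG (u (k m)) (u (k n)) < ε := by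
    intro u hu
    obtain ⟨k, hk, hcau⟩ := ArzelaAscoli.exists_cauchySeq_subseq_of_lipschitzOnWith hK hK
      (fun n ↦ (UniformFun.lipschitzWith_one_precomp (u n)).lipschitzOnWith)
      (fun n _ hf ↦ hG _ (hu n) _ hf)
    simp only [hDG']
    exact ⟨k, hk, EMetric.cauchySeq_iff.mp hcau⟩
  refine ⟨hcauchy, fun hcomplete u hu ↦ ?_⟩
  obtain ⟨k, hk, hcau⟩ := hcauchy u hu
  obtain ⟨g, hg, hlim⟩ := hcomplete (u ∘ k) (fun n ↦ hu _) hcau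
  exact ⟨g, hg, k, hk, hlim⟩

/-- if `Φ` is (sequentially) compact in sup-norm, then every sequence in `G`
admits a `D_G`-Cauchy subsequence; hence if `G` is complete w.r.t. `D_G` it is
(sequentially) compact. -/
theorem stmt9 {X : Type*} [Nonempty X] (Φ : Set (X → ℝ))
    (hb : ∀ φ ∈ Φ, ∃ C : ℝ, ∀ x, |φ x| ≤ C)
    (G : Subgroup (Equiv.Perm X))
    (hG : ∀ g ∈ G, ∀ φ ∈ Φ, (fun x => φ (g x)) ∈ Φ)
    (eD : (X → ℝ) → (X → ℝ) → ℝ≥0∞)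
    (heD : ∀ φ ψ, eD φ ψ = ⨆ x, ENNReal.ofReal |φ x - ψ x|)
    (DG : Equiv.Perm X → Equiv.Perm X → ℝ≥0∞)
    (hDG : ∀ g1 g2, DG g1 g2 = ⨆ φ ∈ Φ, eD (fun x => φ (g1 x)) (fun x => φ (g2 x)))
    (hΦcomp : ∀ u : ℕ → X → ℝ, (∀ n, u n ∈ Φ) →
      ∃ ψ ∈ Φ, ∃ k : ℕ → ℕ, StrictMono k ∧
        ∀ ε : ℝ≥0∞, 0 < ε → ∃ N, ∀ n ≥ N, eD (u (k n)) ψ < ε) :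
    (∀ u : ℕ → Equiv.Perm X, (∀ n, u n ∈ G) →
      ∃ k : ℕ → ℕ, StrictMono k ∧
        ∀ ε : ℝ≥0∞, 0 < ε → ∃ N, ∀ m ≥ N, ∀ n ≥ N, DG (u (k m)) (u (k n)) < ε) ∧
    ((∀ u : ℕ → Equiv.Perm X, (∀ n, u n ∈ G) →
        (∀ ε : ℝ≥0∞, 0 < ε → ∃ N, ∀ m ≥ N, ∀ n ≥ N, DG (u m) (u n) < ε) →
        ∃ g ∈ G, ∀ ε : ℝ≥0∞, 0 < ε → ∃ N, ∀ n ≥ N, DG (u n) g < ε) →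
      ∀ u : ℕ → Equiv.Perm X, (∀ n, u n ∈ G) →
        ∃ g ∈ G, ∃ k : ℕ → ℕ, StrictMono k ∧
          ∀ ε : ℝ≥0∞, 0 < ε → ∃ N, ∀ n ≥ N, DG (u (k n)) g < ε) :=
  stmt9_general Φ G hG eD heD DG hDG hΦcomp
end

section
/- If the right action of G on Φ by composition is continuous with respect to D_Φ and D_G, and F : Φ → Ψ is a GENEO associated with a homomorphism T : G → H, then F is a contraction with respect to the natural pseudo-distances: d_H(F(φ1), F(φ2)) ≤ d_G(φ1, φ2) for all φ1, φ2 ∈ Φ. -/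
/-- if the right action of `G` on `Φ` is continuous w.r.t. `D_Φ` and `D_G`,
and `F` is a GENEO from `(Φ,G)` to `(Ψ,H)` associated with `T : G → H`, then `F` is a
contraction for the natural pseudo-distances: `d_H(F φ1, F φ2) ≤ d_G(φ1, φ2)`. -/
theorem stmt12 {X Y : Type*} [Nonempty X] [Nonempty Y]
    (Φ : Set (X → ℝ)) (Ψ : Set (Y → ℝ))
    (hΦb : ∀ φ ∈ Φ, ∃ C : ℝ, ∀ x, |φ x| ≤ C)
    (hΨb : ∀ ψ ∈ Ψ, ∃ C : ℝ, ∀ y, |ψ y| ≤ C)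
    (G : Subgroup (Equiv.Perm X)) (H : Subgroup (Equiv.Perm Y))
    (hG : ∀ g ∈ G, ∀ φ ∈ Φ, (fun x => φ (g x)) ∈ Φ)
    (hH : ∀ h ∈ H, ∀ ψ ∈ Ψ, (fun y => ψ (h y)) ∈ Ψ)
    (DΦ : (X → ℝ) → (X → ℝ) → ℝ) (hDΦ : ∀ f1 f2, DΦ f1 f2 = ⨆ x, |f1 x - f2 x|)
    (DΨ : (Y → ℝ) → (Y → ℝ) → ℝ) (hDΨ : ∀ f1 f2, DΨ f1 f2 = ⨆ y, |f1 y - f2 y|)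
    (DG : G → G → ℝ)
    (hDG : ∀ g1 g2 : G, DG g1 g2 =
      ⨆ φ : Φ, DΦ (fun x => φ.1 (g1.1 x)) (fun x => φ.1 (g2.1 x)))
    -- continuity of the right action of `G` on `Φ`
    (hcont : ∀ ε : ℝ, 0 < ε → ∀ φ ∈ Φ, ∀ g : G, ∃ δ : ℝ, 0 < δ ∧
      ∀ φ' ∈ Φ, ∀ g' : G, DΦ φ φ' < δ → DG g g' < δ →
        DΦ (fun x => φ (g.1.1 x)) (fun x => φ' (g'.1.1 x)) < ε)
    (T : G →* H)
    (F : (X → ℝ) → (Y → ℝ))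
    (hFmap : ∀ φ ∈ Φ, F φ ∈ Ψ)
    (hFeq : ∀ φ ∈ Φ, ∀ g : G, F (fun x => φ (g.1 x)) = fun y => F φ ((T g).1 y))
    (hFne : ∀ φ1 ∈ Φ, ∀ φ2 ∈ Φ, DΨ (F φ1) (F φ2) ≤ DΦ φ1 φ2)
    (dG : (X → ℝ) → (X → ℝ) → ℝ)
    (hdG : ∀ f1 f2, dG f1 f2 = ⨅ g : G, DΦ f1 (fun x => f2 (g.1 x)))
    (dH : (Y → ℝ) → (Y → ℝ) → ℝ)
    (hdH : ∀ f1 f2, dH f1 f2 = ⨅ h : H, DΨ f1 (fun y => f2 (h.1 y))) :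
    ∀ φ1 ∈ Φ, ∀ φ2 ∈ Φ, dH (F φ1) (F φ2) ≤ dG φ1 φ2 := by
  intro φ1 hφ1 φ2 hφ2
  rw [hdH, hdG]
  apply le_ciInf
  intro g
  have hbdd : BddBelow (Set.range fun h : H => DΨ (F φ1) (fun y => F φ2 (h.1 y))) := by
    refine ⟨0, ?_⟩
    rintro _ ⟨h, rfl⟩
    dsimp only
    rw [hDΨ]
    exact Real.iSup_nonneg fun y => abs_nonneg _
  calc (⨅ h : H, DΨ (F φ1) (fun y => F φ2 (h.1 y)))
      ≤ DΨ (F φ1) (fun y => F φ2 ((T g).1 y)) := ciInf_le hbdd (T g)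
    _ = DΨ (F φ1) (F (fun x => φ2 (g.1 x))) := by rw [hFeq φ2 hφ2 g]
    _ ≤ DΦ φ1 (fun x => φ2 (g.1 x)) :=
        hFne φ1 hφ1 _ (hG g.1 g.2 φ2 hφ2)
end

section
/- If Φ and Ψ are compact with respect to their sup-norm distances and the right action of G on Φ is continuous, then the set of all GENEOs from (Φ, G) to (Ψ, H) associated with T is compact (equivalently sequentially compact) with respect to the metric D_GENEO(F1, F2) = sup_{φ∈Φ} ‖F1(φ) − F2(φ)‖_∞. -/
open scoped ENNReal

/-- The (extended) sup-norm distance between two real-valued functions. -/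
noncomputable def eDist {Z : Type*} (f1 f2 : Z → ℝ) : ℝ≥0∞ :=
  ⨆ z, ENNReal.ofReal |f1 z - f2 z|

/-- `F` is a group equivariant non-expansive operator from `(Φ,G)` to `(Ψ,H)`
associated with the homomorphism `T : G → H`. -/
def IsGENEO {X Y : Type*} (Φ : Set (X → ℝ)) (Ψ : Set (Y → ℝ))
    (G : Subgroup (Equiv.Perm X)) (H : Subgroup (Equiv.Perm Y)) (T : G →* H)
    (F : (X → ℝ) → (Y → ℝ)) : Prop :=
  (∀ φ ∈ Φ, F φ ∈ Ψ) ∧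
  (∀ φ ∈ Φ, ∀ g : G, F (fun x => φ (g.1 x)) = fun y => F φ ((T g).1 y)) ∧
  (∀ φ1 ∈ Φ, ∀ φ2 ∈ Φ, eDist (F φ1) (F φ2) ≤ eDist φ1 φ2)

/-!
Inside the spaces `X →ᵤ ℝ`, `Y →ᵤ ℝ` of functions with the sup (extended) distance, a GENEO
restricts to a 1-Lipschitz map from the compact set `Φ` to the compact set `Ψ`. By the
Arzelà–Ascoli theorem these maps form a compact, hence sequentially compact, set for uniform
convergence on `Φ`, and equivariance and non-expansiveness survive pointwise limits. The limit is
only defined on `Φ`; its values elsewhere are invisible both to `IsGENEO` and to `D_GENEO`.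
-/

open Filter Topology Set UniformFun
open scoped NNReal UniformConvergence

theorem isCompact_setOf_lipschitzWith_mapsTo {α β : Type*} [PseudoEMetricSpace α] [CompactSpace α]
    [PseudoEMetricSpace β] {Q : Set β} (hQ : IsCompact Q) (K : ℝ≥0) :
    IsCompact {f : α →ᵤ β | LipschitzWith K (toFun f) ∧ ∀ a, toFun f a ∈ Q} := by
  set S := {f : α →ᵤ β | LipschitzWith K (toFun f) ∧ ∀ a, toFun f a ∈ Q}
  let F : S → α → β := fun f => toFun f.1
  have hF : IsInducing F :=
    ((LipschitzWith.uniformEquicontinuous F K fun f => f.2.1).equicontinuous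
      |>.inducing_uniformFun_iff_pi).mp .subtypeVal
  have hrange : range F = {g : α → β | LipschitzWith K g} ∩ univ.pi fun _ => Q := by
    ext g
    constructor
    · rintro ⟨⟨f, hf⟩, rfl⟩
      exact ⟨hf.1, fun a _ => hf.2 a⟩
    · rintro ⟨hg, hgQ⟩
      exact ⟨⟨ofFun g, hg, fun a => hgQ a trivial⟩, rfl⟩
  rw [isCompact_iff_compactSpace, ← isCompact_univ_iff, hF.isCompact_iff, image_univ, hrange]
  exact (isCompact_univ_pi fun _ => hQ).inter_left (isClosed_setOfPred_lipschitzWith K)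

theorem eDist_eq_edist {Z : Type*} (f g : Z → ℝ) : eDist f g = edist (ofFun f) (ofFun g) := by
  simp [eDist, UniformFun.edist_def, edist_dist, Real.dist_eq]

theorem tendsto_ofFun_iff_eDist {Z : Type*} {u : ℕ → Z → ℝ} {φ : Z → ℝ} :
    Tendsto (fun n => ofFun (u n)) atTop (𝓝 (ofFun φ)) ↔
      ∀ ε : ℝ≥0∞, 0 < ε → ∃ N, ∀ n ≥ N, eDist (u n) φ < ε := by
  simp only [EMetric.tendsto_atTop, eDist_eq_edist]

theorem isCompact_preimage_toFun {Z : Type*} {Φ : Set (Z → ℝ)}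
    (hΦ : ∀ u : ℕ → Z → ℝ, (∀ n, u n ∈ Φ) →
      ∃ φ ∈ Φ, ∃ k : ℕ → ℕ, StrictMono k ∧
        ∀ ε : ℝ≥0∞, 0 < ε → ∃ N, ∀ n ≥ N, eDist (u (k n)) φ < ε) :
    IsCompact (toFun ⁻¹' Φ : Set (Z →ᵤ ℝ)) := by
  refine IsSeqCompact.isCompact fun u hu => ?_
  obtain ⟨φ, hφ, k, hk, hconv⟩ := hΦ (fun n => toFun (u n)) hu
  exact ⟨ofFun φ, hφ, k, hk, tendsto_ofFun_iff_eDist.mpr hconv⟩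

section Restrict

variable {X Y : Type*} (Φ : Set (X → ℝ))

def restrictUnif (F : (X → ℝ) → (Y → ℝ)) : (toFun ⁻¹' Φ : Set (X →ᵤ ℝ)) →ᵤ (Y →ᵤ ℝ) :=
  ofFun fun φ => ofFun (F (toFun φ.1))

open Classical in
noncomputable def extendUnif (f : (toFun ⁻¹' Φ : Set (X →ᵤ ℝ)) →ᵤ (Y →ᵤ ℝ)) :
    (X → ℝ) → (Y → ℝ) :=
  fun φ => if h : φ ∈ Φ then toFun (toFun f ⟨ofFun φ, h⟩) else 0

theorem restrictUnif_extendUnif (f : (toFun ⁻¹' Φ : Set (X →ᵤ ℝ)) →ᵤ (Y →ᵤ ℝ)) :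
    restrictUnif Φ (extendUnif Φ f) = f := by
  funext ⟨φ, hφ⟩
  exact congrArg ofFun (dif_pos hφ)

theorem edist_restrictUnif (F1 F2 : (X → ℝ) → (Y → ℝ)) :
    edist (restrictUnif Φ F1) (restrictUnif Φ F2) = ⨆ φ : Φ, eDist (F1 φ) (F2 φ) := by
  simp only [eDist_eq_edist]
  -- the subtypes `toFun ⁻¹' Φ` and `Φ` agree up to unfolding `toFun`
  rfl

theorem tendsto_apply_of_tendsto_restrictUnif {ι : Type*} {l : Filter ι}
    {F : ι → (X → ℝ) → (Y → ℝ)} {Fbar : (X → ℝ) → (Y → ℝ)}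
    (h : Tendsto (fun i => restrictUnif Φ (F i)) l (𝓝 (restrictUnif Φ Fbar)))
    {φ : X → ℝ} (hφ : φ ∈ Φ) : Tendsto (fun i => ofFun (F i φ)) l (𝓝 (ofFun (Fbar φ))) :=
  ((uniformContinuous_eval _ (⟨ofFun φ, hφ⟩ : (toFun ⁻¹' Φ : Set (X →ᵤ ℝ)))).continuous.tendsto
    _).comp h

end Restrict

section GENEO

variable {X Y : Type*} {Φ : Set (X → ℝ)} {Ψ : Set (Y → ℝ)}
  {G : Subgroup (Equiv.Perm X)} {H : Subgroup (Equiv.Perm Y)} {T : G →* H}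

theorem IsGENEO.lipschitzWith_restrictUnif {F : (X → ℝ) → (Y → ℝ)} (hF : IsGENEO Φ Ψ G H T F) :
    LipschitzWith 1 (toFun (restrictUnif Φ F)) :=
  LipschitzWith.of_edist_le fun φ1 φ2 => by
    have h := hF.2.2 (toFun φ1.1) φ1.2 (toFun φ2.1) φ2.2
    rwa [eDist_eq_edist, eDist_eq_edist] at h

theorem IsGENEO.of_tendsto {ι : Type*} {l : Filter ι} [l.NeBot]
    (hG : ∀ g ∈ G, ∀ φ ∈ Φ, (fun x => φ (g x)) ∈ Φ)
    {F : ι → (X → ℝ) → (Y → ℝ)} (hF : ∀ i, IsGENEO Φ Ψ G H T (F i)) {Fbar : (X → ℝ) → (Y → ℝ)}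
    (hΨ : ∀ φ ∈ Φ, Fbar φ ∈ Ψ)
    (hlim : ∀ φ ∈ Φ, Tendsto (fun i => ofFun (F i φ)) l (𝓝 (ofFun (Fbar φ)))) :
    IsGENEO Φ Ψ G H T Fbar := by
  refine ⟨hΨ, fun φ hφ g => ofFun.injective ?_, fun φ1 hφ1 φ2 hφ2 => ?_⟩
  · refine tendsto_nhds_unique (hlim _ (hG g g.2 φ hφ)) ?_
    simp only [(hF _).2.1 φ hφ g]
    exact (UniformFun.precomp_uniformContinuous.continuous.tendsto _).comp (hlim φ hφ)
  · rw [eDist_eq_edist (Fbar φ1)]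
    refine le_of_tendsto' ((hlim φ1 hφ1).edist (hlim φ2 hφ2)) fun i => ?_
    rw [← eDist_eq_edist]
    exact (hF i).2.2 φ1 hφ1 φ2 hφ2

end GENEO

theorem stmt15_general {X Y : Type*}
    (Φ : Set (X → ℝ)) (Ψ : Set (Y → ℝ))
    (G : Subgroup (Equiv.Perm X)) (H : Subgroup (Equiv.Perm Y))
    (hG : ∀ g ∈ G, ∀ φ ∈ Φ, (fun x => φ (g x)) ∈ Φ)
    (T : G →* H)
    -- sequential compactness of `Φ` and `Ψ` with respect to the sup-norm distance
    (hΦcomp : ∀ u : ℕ → X → ℝ, (∀ n, u n ∈ Φ) →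
      ∃ φ ∈ Φ, ∃ k : ℕ → ℕ, StrictMono k ∧
        ∀ ε : ℝ≥0∞, 0 < ε → ∃ N, ∀ n ≥ N, eDist (u (k n)) φ < ε)
    (hΨcomp : ∀ v : ℕ → Y → ℝ, (∀ n, v n ∈ Ψ) →
      ∃ ψ ∈ Ψ, ∃ k : ℕ → ℕ, StrictMono k ∧
        ∀ ε : ℝ≥0∞, 0 < ε → ∃ N, ∀ n ≥ N, eDist (v (k n)) ψ < ε)
    (DGEN : ((X → ℝ) → (Y → ℝ)) → ((X → ℝ) → (Y → ℝ)) → ℝ≥0∞)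
    (hDGEN : ∀ F1 F2, DGEN F1 F2 = ⨆ φ : Φ, eDist (F1 φ.1) (F2 φ.1)) :
    ∀ F : ℕ → ((X → ℝ) → (Y → ℝ)), (∀ n, IsGENEO Φ Ψ G H T (F n)) →
      ∃ Fbar, IsGENEO Φ Ψ G H T Fbar ∧ ∃ k : ℕ → ℕ, StrictMono k ∧
        ∀ ε : ℝ≥0∞, 0 < ε → ∃ N, ∀ n ≥ N, DGEN (F (k n)) Fbar < ε := by
  intro F hF
  have : CompactSpace (toFun ⁻¹' Φ : Set (X →ᵤ ℝ)) :=
    isCompact_iff_compactSpace.mp (isCompact_preimage_toFun hΦcomp)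
  obtain ⟨f, ⟨-, hfΨ⟩, k, hk, hlim⟩ :=
    (isCompact_setOf_lipschitzWith_mapsTo (isCompact_preimage_toFun hΨcomp) 1).isSeqCompact
      (x := fun n => restrictUnif Φ (F n))
      fun n => ⟨(hF n).lipschitzWith_restrictUnif, fun φ => (hF n).1 _ φ.2⟩
  rw [← restrictUnif_extendUnif Φ f] at hlim hfΨ
  refine ⟨extendUnif Φ f,
    IsGENEO.of_tendsto hG (fun n => hF (k n)) (fun φ hφ => hfΨ ⟨ofFun φ, hφ⟩)
      fun φ hφ => tendsto_apply_of_tendsto_restrictUnif Φ hlim hφ, k, hk, ?_⟩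
  simpa only [hDGEN, ← edist_restrictUnif, Function.comp_apply] using
    EMetric.tendsto_atTop.mp hlim

/-- if `Φ` and `Ψ` are (sequentially) compact for the sup-norm distance and
the right action of `G` on `Φ` is continuous, then the set of all GENEOs from `(Φ,G)` to
`(Ψ,H)` associated with `T` is sequentially compact with respect to
`D_GENEO(F1,F2) = sup_{φ∈Φ} ‖F1 φ − F2 φ‖_∞`. -/
theorem stmt15 {X Y : Type*} [Nonempty X] [Nonempty Y]
    (Φ : Set (X → ℝ)) (Ψ : Set (Y → ℝ))
    (G : Subgroup (Equiv.Perm X)) (H : Subgroup (Equiv.Perm Y))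
    (hG : ∀ g ∈ G, ∀ φ ∈ Φ, (fun x => φ (g x)) ∈ Φ)
    (hH : ∀ h ∈ H, ∀ ψ ∈ Ψ, (fun y => ψ (h y)) ∈ Ψ)
    (T : G →* H)
    -- sequential compactness of `Φ` and `Ψ` with respect to the sup-norm distance
    (hΦcomp : ∀ u : ℕ → X → ℝ, (∀ n, u n ∈ Φ) →
      ∃ φ ∈ Φ, ∃ k : ℕ → ℕ, StrictMono k ∧
        ∀ ε : ℝ≥0∞, 0 < ε → ∃ N, ∀ n ≥ N, eDist (u (k n)) φ < ε)
    (hΨcomp : ∀ v : ℕ → Y → ℝ, (∀ n, v n ∈ Ψ) →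
      ∃ ψ ∈ Ψ, ∃ k : ℕ → ℕ, StrictMono k ∧
        ∀ ε : ℝ≥0∞, 0 < ε → ∃ N, ∀ n ≥ N, eDist (v (k n)) ψ < ε)
    (DG : G → G → ℝ≥0∞)
    (hDG : ∀ g1 g2 : G, DG g1 g2 =
      ⨆ φ : Φ, eDist (fun x => φ.1 (g1.1 x)) (fun x => φ.1 (g2.1 x)))
    -- continuity of the right action of `G` on `Φ`
    (hcont : ∀ ε : ℝ≥0∞, 0 < ε → ∀ φ ∈ Φ, ∀ g : G, ∃ δ : ℝ≥0∞, 0 < δ ∧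
      ∀ φ' ∈ Φ, ∀ g' : G, eDist φ φ' < δ → DG g g' < δ →
        eDist (fun x => φ (g.1.1 x)) (fun x => φ' (g'.1.1 x)) < ε)
    (DGEN : ((X → ℝ) → (Y → ℝ)) → ((X → ℝ) → (Y → ℝ)) → ℝ≥0∞)
    (hDGEN : ∀ F1 F2, DGEN F1 F2 = ⨆ φ : Φ, eDist (F1 φ.1) (F2 φ.1)) :
    ∀ F : ℕ → ((X → ℝ) → (Y → ℝ)), (∀ n, IsGENEO Φ Ψ G H T (F n)) →
      ∃ Fbar, IsGENEO Φ Ψ G H T Fbar ∧ ∃ k : ℕ → ℕ, StrictMono k ∧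
        ∀ ε : ℝ≥0∞, 0 < ε → ∃ N, ∀ n ≥ N, DGEN (F (k n)) Fbar < ε :=
  stmt15_general Φ Ψ G H hG T hΦcomp hΨcomp DGEN hDGEN
end
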